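/- Let s ~ CN(0, λ) with λ > 0, let κ, λₚ, P > 0 and 0 ≤ τ ≤ τ̃ ≤ τ̂ be real thresholds, and define x = √P·s/|s| if |s| ≥ τ̂, x = 0 if τ̃ ≤ |s| < τ̂, x = s/(1+κλₚ) if τ ≤ |s| < τ̃, and x = 0 if |s| < τ. Then E[Re(x̄·s)] = Ξ/(1+κλₚ) + √P·τ̂·e^{−τ̂²/λ} + √(πλP)·Q(τ̂·√(2/λ)), where Ξ = (λ + τ²)·e^{−τ²/λ} − (λ + τ̃²)·e^{−τ̃²/λ} and Q(x) = ∫_x^∞ (1/√(2π))·e^{−t²/2} dt. -/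

import Mathlib

open MeasureTheory ProbabilityTheory

/-- The law of a circularly symmetric complex Gaussian `s = a + b·i` with variance `λ`,
modeled as the product of two real Gaussians `N(0, λ/2)` on the plane `ℝ × ℝ`. -/
noncomputable def complexGaussian (lam : ℝ) : Measure (ℝ × ℝ) :=
  (gaussianReal 0 (Real.toNNReal (lam / 2))).prod (gaussianReal 0 (Real.toNNReal (lam / 2)))

/-- The complex number corresponding to a point of the plane. -/
noncomputable def toC (p : ℝ × ℝ) : ℂ := (p.1 : ℂ) + (p.2 : ℂ) * Complex.I

/-- The standard Gaussian tail function `Q(x) = ∫_x^∞ (1/√(2π)) e^{−t²/2} dt`. -/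
noncomputable def Qfun (x : ℝ) : ℝ :=
  ∫ t in Set.Ioi x, (1 / Real.sqrt (2 * Real.pi)) * Real.exp (-(t ^ 2) / 2)

/-! The map `s ↦ x` only rescales `s` by a factor depending on `|s|`, so `Re(x̄·s)` is a
function of `r = |s|`, and in polar coordinates `|s|` has density `(2r/λ) e^{-r²/λ}`. The
expectation thus splits into `(2/λ)/(1+κλₚ) ∫_τ^τ̃ r³ e^{-r²/λ} dr`, which has the elementary
antiderivative `-(λ/2)(λ + r²) e^{-r²/λ}`, and `(2/λ)√P ∫_τ̂^∞ r² e^{-r²/λ} dr`, which one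
integration by parts turns into a boundary term plus the Gaussian tail
`∫_τ̂^∞ e^{-r²/λ} dr = √(πλ) Q(τ̂√(2/λ))`. -/

open Real Set Filter

section PolarCoordinates

variable {E : Type*} [NormedAddCommGroup E] [NormedSpace ℝ E]

lemma toC_eq_measurableEquivRealProd_symm :
    toC = Complex.measurableEquivRealProd.symm := by
  funext p
  apply Complex.ext <;> simp [toC]

lemma sq_norm_toC (p : ℝ × ℝ) : ‖toC p‖ ^ 2 = p.1 ^ 2 + p.2 ^ 2 := by
  rw [Complex.sq_norm, toC, Complex.normSq_add_mul_I]

lemma integral_comp_norm_toC (f : ℝ → E) :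
    ∫ p : ℝ × ℝ, f ‖toC p‖ = (2 * π) • ∫ r in Ioi (0 : ℝ), r • f r := by
  rw [toC_eq_measurableEquivRealProd_symm,
    (Complex.volume_preserving_equiv_real_prod.symm).integral_comp
      Complex.measurableEquivRealProd.symm.measurableEmbedding (fun z => f ‖z‖),
    ← Complex.integral_comp_polarCoord_symm, polarCoord_target,
    setIntegral_congr_fun (g := fun q => q.1 • f q.1) (measurableSet_Ioi.prod measurableSet_Ioo)
      fun q hq => by simp [abs_of_pos (show 0 < q.1 from hq.1)],
    Measure.volume_eq_prod, ← Measure.prod_restrict, integral_fun_fst (fun r : ℝ => r • f r),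
    measureReal_restrict_apply_univ, volume_real_Ioo_of_le (by linarith [pi_pos])]
  ring_nf

lemma integral_complexGaussian {lam : ℝ} (hlam : 0 < lam) (g : ℝ × ℝ → E) :
    ∫ p, g p ∂complexGaussian lam
      = ∫ p, ((π * lam)⁻¹ * exp (-‖toC p‖ ^ 2 / lam)) • g p := by
  have hv : Real.toNNReal (lam / 2) ≠ 0 := by simpa using hlam
  rw [complexGaussian, gaussianReal_of_var_ne_zero 0 hv,
    prod_withDensity (measurable_gaussianPDF _ _) (measurable_gaussianPDF _ _),
    ← Measure.volume_eq_prod, integral_withDensity_eq_integral_toReal_smul (by fun_prop)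
      (ae_of_all _ fun _ => ENNReal.mul_lt_top gaussianPDF_lt_top gaussianPDF_lt_top)]
  congr with p
  rw [ENNReal.toReal_mul, gaussianPDF, gaussianPDF,
    ENNReal.toReal_ofReal (gaussianPDFReal_nonneg _ _ _),
    ENNReal.toReal_ofReal (gaussianPDFReal_nonneg _ _ _), gaussianPDFReal, gaussianPDFReal,
    Real.coe_toNNReal _ (by positivity), sq_norm_toC]
  congr 1
  rw [show 2 * π * (lam / 2) = π * lam by ring, mul_mul_mul_comm, ← mul_inv,
    mul_self_sqrt (by positivity), ← exp_add]
  congr 2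
  field_simp
  ring

lemma integral_comp_norm_toC_complexGaussian {lam : ℝ} (hlam : 0 < lam) (φ : ℝ → E) :
    ∫ p, φ ‖toC p‖ ∂complexGaussian lam
      = (2 / lam) • ∫ r in Ioi (0 : ℝ), (r * exp (-r ^ 2 / lam)) • φ r := by
  rw [integral_complexGaussian hlam,
    integral_comp_norm_toC (fun r => ((π * lam)⁻¹ * exp (-r ^ 2 / lam)) • φ r),
    ← integral_smul, ← integral_smul]
  congr with r
  simp only [smul_smul]
  congr 1
  field_simp

end PolarCoordinates

section GaussianMoments

lemma hasDerivAt_exp_neg_sq_div (lam r : ℝ) :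
    HasDerivAt (fun r => exp (-r ^ 2 / lam)) (-(2 * r / lam) * exp (-r ^ 2 / lam)) r := by
  have h : HasDerivAt (fun r : ℝ => -r ^ 2 / lam) (-(2 * r) / lam) r := by
    simpa using (hasDerivAt_pow 2 r).neg.div_const lam
  convert h.exp using 1
  ring

variable {lam : ℝ}

lemma integral_cube_mul_exp_neg_sq_div (hlam : lam ≠ 0) (a b : ℝ) :
    ∫ r in a..b, r ^ 3 * exp (-r ^ 2 / lam)
      = lam / 2 * ((lam + a ^ 2) * exp (-a ^ 2 / lam) - (lam + b ^ 2) * exp (-b ^ 2 / lam)) := by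
  rw [intervalIntegral.integral_eq_sub_of_hasDerivAt
    (f := fun r => -(lam / 2) * ((lam + r ^ 2) * exp (-r ^ 2 / lam))) (fun r _ => ?_)
    (by apply Continuous.intervalIntegrable; fun_prop)]
  · ring
  have hp : HasDerivAt (fun r : ℝ => lam + r ^ 2) (2 * r) r := by
    simpa using (hasDerivAt_pow 2 r).const_add lam
  refine ((hp.fun_mul (hasDerivAt_exp_neg_sq_div lam r)).const_mul (-(lam / 2))).congr_deriv ?_
  field_simp
  ring

lemma integrable_exp_neg_sq_div (hlam : 0 < lam) :
    Integrable fun r : ℝ => exp (-r ^ 2 / lam) := by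
  simpa [neg_div, div_eq_inv_mul] using integrable_exp_neg_mul_sq (inv_pos.2 hlam)

lemma integrable_sq_mul_exp_neg_sq_div (hlam : 0 < lam) :
    Integrable fun r : ℝ => r ^ 2 * exp (-r ^ 2 / lam) := by
  simpa [neg_div, div_eq_inv_mul] using
    integrable_rpow_mul_exp_neg_mul_sq (inv_pos.2 hlam) (s := 2) (by norm_num)

lemma tendsto_mul_exp_neg_sq_div_atTop (hlam : 0 < lam) :
    Tendsto (fun r => r * exp (-r ^ 2 / lam)) atTop (nhds 0) := by
  refine ((tendsto_rpow_abs_mul_exp_neg_mul_sq_cocompact (inv_pos.2 hlam) 1).mono_left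
    atTop_le_cocompact).congr' ?_
  filter_upwards [eventually_ge_atTop 0] with r hr
  rw [rpow_one, abs_of_nonneg hr, neg_mul, ← div_eq_inv_mul, neg_div]

lemma integral_Ioi_exp_neg_sq_div (hlam : 0 < lam) (a : ℝ) :
    ∫ r in Ioi a, exp (-r ^ 2 / lam) = √(π * lam) * Qfun (a * √(2 / lam)) := by
  set b := √(2 / lam)
  have hb : 0 < b := sqrt_pos.2 (by positivity)
  have hb2 : b ^ 2 = 2 / lam := sq_sqrt (by positivity)
  have hQ : √(2 * π) * Qfun (a * b) = ∫ t in Ioi (b * a), exp (-t ^ 2 / 2) := by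
    rw [Qfun, integral_const_mul, mul_comm a b]
    simp only [neg_div]
    field_simp
  have hs : √(π * lam) = b⁻¹ * √(2 * π) := by
    rw [← sqrt_inv, ← sqrt_mul (by positivity)]
    field_simp
  calc ∫ r in Ioi a, exp (-r ^ 2 / lam) = ∫ r in Ioi a, exp (-(b * r) ^ 2 / 2) := by
        congr 1 with r
        rw [mul_pow, hb2]
        field_simp
    _ = b⁻¹ * ∫ t in Ioi (b * a), exp (-t ^ 2 / 2) :=
        integral_comp_mul_left_Ioi (fun t => exp (-t ^ 2 / 2)) a hb
    _ = √(π * lam) * Qfun (a * b) := by rw [← hQ, hs]; ring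

lemma integral_Ioi_sq_mul_exp_neg_sq_div (hlam : 0 < lam) (a : ℝ) :
    ∫ r in Ioi a, r ^ 2 * exp (-r ^ 2 / lam)
      = lam / 2 * (a * exp (-a ^ 2 / lam) + ∫ r in Ioi a, exp (-r ^ 2 / lam)) := by
  have hderiv (r : ℝ) : HasDerivAt (fun r => -(lam / 2) * (r * exp (-r ^ 2 / lam)))
      ((r ^ 2 - lam / 2) * exp (-r ^ 2 / lam)) r := by
    refine (((hasDerivAt_id' r).fun_mul (hasDerivAt_exp_neg_sq_div lam r)).const_mul
      (-(lam / 2))).congr_deriv ?_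
    field_simp
    ring
  have hint : Integrable fun r : ℝ => (r ^ 2 - lam / 2) * exp (-r ^ 2 / lam) := by
    simpa only [sub_mul, Pi.sub_def] using
      (integrable_sq_mul_exp_neg_sq_div hlam).sub
        ((integrable_exp_neg_sq_div hlam).const_mul (lam / 2))
  have hparts := integral_Ioi_of_hasDerivAt_of_tendsto' (a := a) (fun r _ => hderiv r)
    hint.integrableOn
    (by simpa using (tendsto_mul_exp_neg_sq_div_atTop hlam).const_mul (-(lam / 2)))
  calc ∫ r in Ioi a, r ^ 2 * exp (-r ^ 2 / lam)
      = ∫ r in Ioi a,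
          ((r ^ 2 - lam / 2) * exp (-r ^ 2 / lam) + lam / 2 * exp (-r ^ 2 / lam)) := by
        congr 1 with r
        ring
    _ = _ := by
        rw [integral_add hint.integrableOn
          ((integrable_exp_neg_sq_div hlam).const_mul _).integrableOn, integral_const_mul, hparts]
        ring

end GaussianMoments

/-- `Re(x̄·s)` as a function of `r = |s|`, where `c = 1 + κλₚ`. -/
noncomputable def correlationProfile (P c τ τt τh r : ℝ) : ℝ :=
  if τh ≤ r then √P * r else if τt ≤ r then 0 else if τ ≤ r then r ^ 2 / c else 0

lemma re_conj_mul_self_eq_correlationProfile (P c τ τt τh : ℝ) (z : ℂ) :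
    ((starRingEnd ℂ) (if τh ≤ ‖z‖ then (√P : ℂ) * z / ((‖z‖ : ℝ) : ℂ)
      else if τt ≤ ‖z‖ then 0
      else if τ ≤ ‖z‖ then z / ((c : ℝ) : ℂ)
      else 0) * z).re = correlationProfile P c τ τt τh ‖z‖ := by
  have hz : (starRingEnd ℂ) z * z = ((‖z‖ ^ 2 : ℝ) : ℂ) := by
    rw [mul_comm, Complex.mul_conj, Complex.normSq_eq_norm_sq]
  unfold correlationProfile
  split_ifs
  · rcases eq_or_ne z 0 with rfl | hz0
    · simp
    · rw [map_div₀, map_mul, Complex.conj_ofReal, Complex.conj_ofReal, div_mul_eq_mul_div,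
        mul_assoc, hz, ← Complex.ofReal_mul, ← Complex.ofReal_div, Complex.ofReal_re]
      field_simp [norm_ne_zero_iff.2 hz0]
  · simp
  · rw [map_div₀, Complex.conj_ofReal, div_mul_eq_mul_div, hz, ← Complex.ofReal_div,
      Complex.ofReal_re]
  · simp

lemma mul_correlationProfile_eq_indicator {lam P c τ τt τh : ℝ} (hτtτh : τt ≤ τh) (r : ℝ) :
    r * exp (-r ^ 2 / lam) * correlationProfile P c τ τt τh r
      = (Ico τ τt).indicator (fun r => r ^ 3 * exp (-r ^ 2 / lam) / c) r
        + (Ici τh).indicator (fun r => √P * (r ^ 2 * exp (-r ^ 2 / lam))) r := by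
  simp only [correlationProfile, indicator, mem_Ico, mem_Ici]
  split_ifs <;> grind

lemma integral_correlationProfile {lam P c τ τt τh : ℝ} (hlam : 0 < lam) (hτ : 0 ≤ τ)
    (hττt : τ ≤ τt) (hτtτh : τt ≤ τh) :
    (2 / lam) * ∫ r in Ioi (0 : ℝ), r * exp (-r ^ 2 / lam) * correlationProfile P c τ τt τh r
      = ((lam + τ ^ 2) * exp (-τ ^ 2 / lam) - (lam + τt ^ 2) * exp (-τt ^ 2 / lam)) / c
        + √P * τh * exp (-τh ^ 2 / lam) + √(π * lam * P) * Qfun (τh * √(2 / lam)) := by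
  have hIco : ∫ r in Ico τ τt, r ^ 3 * exp (-r ^ 2 / lam) / c
      = lam / 2 * ((lam + τ ^ 2) * exp (-τ ^ 2 / lam)
          - (lam + τt ^ 2) * exp (-τt ^ 2 / lam)) / c := by
    rw [integral_Ico_eq_integral_Ioo, ← integral_Ioc_eq_integral_Ioo,
      ← intervalIntegral.integral_of_le hττt, intervalIntegral.integral_div,
      integral_cube_mul_exp_neg_sq_div hlam.ne']
  have hIci : ∫ r in Ici τh, √P * (r ^ 2 * exp (-r ^ 2 / lam))
      = √P * (lam / 2 *
          (τh * exp (-τh ^ 2 / lam) + √(π * lam) * Qfun (τh * √(2 / lam)))) := by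
    rw [integral_Ici_eq_integral_Ioi, integral_const_mul, integral_Ioi_sq_mul_exp_neg_sq_div hlam,
      integral_Ioi_exp_neg_sq_div hlam]
  have hint_Ico : Integrable ((Ico τ τt).indicator fun r => r ^ 3 * exp (-r ^ 2 / lam) / c) :=
    ((Continuous.integrableOn_Icc (by fun_prop)).mono_set Ico_subset_Icc_self).integrable_indicator
      measurableSet_Ico
  have hint_Ici : Integrable ((Ici τh).indicator fun r => √P * (r ^ 2 * exp (-r ^ 2 / lam))) :=
    ((integrable_sq_mul_exp_neg_sq_div hlam).const_mul _).integrableOn.integrable_indicator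
      measurableSet_Ici
  rw [← integral_Ici_eq_integral_Ioi]
  simp_rw [mul_correlationProfile_eq_indicator hτtτh]
  rw [integral_add hint_Ico.integrableOn hint_Ici.integrableOn,
    setIntegral_indicator measurableSet_Ico, setIntegral_indicator measurableSet_Ici,
    inter_eq_right.2 (Ico_subset_Ici_self.trans (Ici_subset_Ici.2 hτ)),
    inter_eq_right.2 (Ici_subset_Ici.2 (hτ.trans (hττt.trans hτtτh))), hIco, hIci,
    sqrt_mul (by positivity) P]
  field_simp
  ring

theorem correlation_two_step_general (lam κ lamp P τ τt τh : ℝ)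
    (hlam : 0 < lam)
    (hτ : 0 ≤ τ) (hττt : τ ≤ τt) (hτtτh : τt ≤ τh) :
    let x : ℝ × ℝ → ℂ := fun p =>
      if τh ≤ ‖toC p‖ then
        (Real.sqrt P : ℂ) * toC p / ((‖toC p‖ : ℝ) : ℂ)
      else if τt ≤ ‖toC p‖ then 0
      else if τ ≤ ‖toC p‖ then toC p / ((1 + κ * lamp : ℝ) : ℂ)
      else 0
    let Ξ : ℝ := (lam + τ ^ 2) * Real.exp (-(τ ^ 2) / lam)
      - (lam + τt ^ 2) * Real.exp (-(τt ^ 2) / lam)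
    (∫ p : ℝ × ℝ, ((starRingEnd ℂ) (x p) * toC p).re ∂(complexGaussian lam))
      = Ξ / (1 + κ * lamp) + Real.sqrt P * τh * Real.exp (-(τh ^ 2) / lam)
        + Real.sqrt (Real.pi * lam * P) * Qfun (τh * Real.sqrt (2 / lam)) := by
  intro x Ξ
  calc ∫ p, ((starRingEnd ℂ) (x p) * toC p).re ∂complexGaussian lam
      = ∫ p, correlationProfile P (1 + κ * lamp) τ τt τh ‖toC p‖ ∂complexGaussian lam :=
        integral_congr_ae (ae_of_all _ fun p => re_conj_mul_self_eq_correlationProfile _ _ _ _ _ _)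
    _ = _ := by
        rw [integral_comp_norm_toC_complexGaussian hlam]
        exact integral_correlationProfile hlam hτ hττt hτtτh

/-- For `s ~ CN(0, λ)` with `λ > 0`, `κ, λₚ, P > 0` and thresholds
`0 ≤ τ ≤ τ̃ ≤ τ̂`, the two-step hard-thresholded variable `x` satisfies
`E[Re(x̄·s)] = Ξ/(1+κλₚ) + √P·τ̂·e^{−τ̂²/λ} + √(πλP)·Q(τ̂·√(2/λ))` where
`Ξ = (λ + τ²)·e^{−τ²/λ} − (λ + τ̃²)·e^{−τ̃²/λ}`. -/
theorem correlation_two_step (lam κ lamp P τ τt τh : ℝ)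
    (hlam : 0 < lam) (hκ : 0 < κ) (hlamp : 0 < lamp) (hP : 0 < P)
    (hτ : 0 ≤ τ) (hττt : τ ≤ τt) (hτtτh : τt ≤ τh) :
    let x : ℝ × ℝ → ℂ := fun p =>
      if τh ≤ ‖toC p‖ then
        (Real.sqrt P : ℂ) * toC p / ((‖toC p‖ : ℝ) : ℂ)
      else if τt ≤ ‖toC p‖ then 0
      else if τ ≤ ‖toC p‖ then toC p / ((1 + κ * lamp : ℝ) : ℂ)
      else 0
    let Ξ : ℝ := (lam + τ ^ 2) * Real.exp (-(τ ^ 2) / lam)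
      - (lam + τt ^ 2) * Real.exp (-(τt ^ 2) / lam)
    (∫ p : ℝ × ℝ, ((starRingEnd ℂ) (x p) * toC p).re ∂(complexGaussian lam))
      = Ξ / (1 + κ * lamp) + Real.sqrt P * τh * Real.exp (-(τh ^ 2) / lam)
        + Real.sqrt (Real.pi * lam * P) * Qfun (τh * Real.sqrt (2 / lam)) :=
  correlation_two_step_general lam κ lamp P τ τt τh hlam hτ hττt hτtτh
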